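/- arXiv:2211.10541 — 2 statements merged into one kernel-verified Lean document; each statement's English description precedes it below -/
import Mathlib

section
/- For 0 < q < 1 and α > 0, define C_q = [2(1-q)]^{1/(2-q)} + q[2(1-q)]^{(q-1)/(2-q)}. If |u| < C_q α^{1/(2-q)}, then β = 0 is the unique global minimizer of f(β) = (1/2)(β-u)² + α|β|^q; if |u| > C_q α^{1/(2-q)}, then the global minimizer is nonzero, has the same sign as u, and its absolute value is the largest solution β̃ > 0 of β + qαβ^{q-1} = |u|. -/
lemma aux_C_eq (q : ℝ) (hq2 : q < 1) :
    (2*(1-q)) ^ ((1:ℝ)/(2-q)) + q * (2*(1-q)) ^ ((q-1)/(2-q))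
      = (2-q) * (2*(1-q)) ^ ((q-1)/(2-q)) := by
  have h2q : (0:ℝ) < 2 - q := by linarith
  have hD : (0:ℝ) < 2*(1-q) := by linarith
  have h1 : (1:ℝ)/(2-q) = (q-1)/(2-q) + 1 := by field_simp; ring
  rw [h1, Real.rpow_add hD, Real.rpow_one]; ring

lemma aux_lb (q α : ℝ) (hq1 : 0 < q) (hq2 : q < 1) (hα : 0 < α) (t : ℝ) (ht : 0 < t) :
    ((2*(1-q)) ^ ((1:ℝ)/(2-q)) + q * (2*(1-q)) ^ ((q-1)/(2-q))) * α ^ ((1:ℝ)/(2-q))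
      ≤ t/2 + α * t ^ (q-1) := by
  have h2q : (0:ℝ) < 2 - q := by linarith
  have hD : (0:ℝ) < 2*(1-q) := by linarith
  have h1q : (0:ℝ) < 1 - q := by linarith
  set w₁ : ℝ := (1-q)/(2-q) with hw₁def
  set w₂ : ℝ := 1/(2-q) with hw₂def
  have hw₁ : 0 ≤ w₁ := by positivity
  have hw₂ : 0 ≤ w₂ := by positivity
  have hsum : w₁ + w₂ = 1 := by rw [hw₁def, hw₂def]; field_simp; ring
  set p₁ : ℝ := (2-q)/(2*(1-q)) * t with hp₁def
  set p₂ : ℝ := (2-q)*(α*t^(q-1)) with hp₂def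
  have hp₁ : 0 ≤ p₁ := by positivity
  have hp₂ : 0 ≤ p₂ := by positivity
  have key := Real.geom_mean_le_arith_mean2_weighted hw₁ hw₂ hp₁ hp₂ hsum
  have hrhs : w₁ * p₁ + w₂ * p₂ = t/2 + α * t^(q-1) := by
    rw [hw₁def, hw₂def, hp₁def, hp₂def]; field_simp
  have hlhs : p₁ ^ w₁ * p₂ ^ w₂
      = ((2*(1-q)) ^ ((1:ℝ)/(2-q)) + q * (2*(1-q)) ^ ((q-1)/(2-q))) * α ^ ((1:ℝ)/(2-q)) := by
    have e1 : p₁ ^ w₁ = (2-q)^w₁ / (2*(1-q))^w₁ * t^w₁ := by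
      rw [hp₁def, Real.mul_rpow (by positivity) ht.le, Real.div_rpow h2q.le hD.le]
    have e2 : p₂ ^ w₂ = (2-q)^w₂ * (α^w₂ * t^((q-1)*w₂)) := by
      rw [hp₂def, Real.mul_rpow h2q.le (by positivity), Real.mul_rpow hα.le (by positivity),
        ← Real.rpow_mul ht.le]
    have et : t^w₁ * t^((q-1)*w₂) = 1 := by
      rw [← Real.rpow_add ht]
      have h0 : w₁ + (q-1)*w₂ = 0 := by rw [hw₁def, hw₂def]; ring
      rw [h0, Real.rpow_zero]
    have e2q : (2-q)^w₁ * (2-q)^w₂ = 2-q := by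
      rw [← Real.rpow_add h2q, hsum, Real.rpow_one]
    have eK : (2*(1-q))^w₁ * (2*(1-q))^((q-1)/(2-q)) = 1 := by
      rw [← Real.rpow_add hD]
      have h0 : w₁ + (q-1)/(2-q) = 0 := by rw [hw₁def]; ring
      rw [h0, Real.rpow_zero]
    rw [e1, e2, aux_C_eq q hq2]
    have expand : (2-q)^w₁/(2*(1-q))^w₁*t^w₁*((2-q)^w₂*(α^w₂*t^((q-1)*w₂)))
        = ((2-q)^w₁*(2-q)^w₂) * (t^w₁*t^((q-1)*w₂)) * α^w₂ * ((2*(1-q))^w₁)⁻¹ := by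
      ring
    rw [expand, et, e2q, mul_one, inv_eq_of_mul_eq_one_right eK, hw₂def]
    ring
  linarith [hrhs ▸ hlhs ▸ key]

lemma aux_star (q α : ℝ) (hq1 : 0 < q) (hq2 : q < 1) (hα : 0 < α) :
    (2*(1-q)*α) ^ ((1:ℝ)/(2-q)) / 2 + α * ((2*(1-q)*α) ^ ((1:ℝ)/(2-q))) ^ (q-1)
      = ((2*(1-q)) ^ ((1:ℝ)/(2-q)) + q * (2*(1-q)) ^ ((q-1)/(2-q))) * α ^ ((1:ℝ)/(2-q)) := by
  have h2q : (0:ℝ) < 2 - q := by linarith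
  have hD : (0:ℝ) < 2*(1-q) := by linarith
  have hDα : (0:ℝ) < 2*(1-q)*α := by positivity
  have e1 : ((2*(1-q)*α) ^ ((1:ℝ)/(2-q))) ^ (q-1) = (2*(1-q))^((q-1)/(2-q)) * α^((q-1)/(2-q)) := by
    rw [← Real.rpow_mul hDα.le, Real.mul_rpow hD.le hα.le]
    norm_num
    ring_nf
  have e2 : α * α^((q-1)/(2-q)) = α^((1:ℝ)/(2-q)) := by
    have h0 : (1:ℝ)/(2-q) = 1 + (q-1)/(2-q) := by field_simp; ring
    rw [h0, Real.rpow_add hα, Real.rpow_one]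
  have e3 : (2*(1-q)*α)^((1:ℝ)/(2-q)) = (2*(1-q))^((1:ℝ)/(2-q)) * α^((1:ℝ)/(2-q)) :=
    Real.mul_rpow hD.le hα.le
  have e4 : (2*(1-q))^((1:ℝ)/(2-q)) = 2*(1-q) * (2*(1-q))^((q-1)/(2-q)) := by
    have h1 : (1:ℝ)/(2-q) = (q-1)/(2-q) + 1 := by field_simp; ring
    rw [h1, Real.rpow_add hD, Real.rpow_one]; ring
  rw [e1, e3, e4]
  linear_combination (2*(1-q))^((q-1)/(2-q)) * e2

lemma aux_deriv (q α u : ℝ) (f : ℝ → ℝ)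
    (hf : ∀ β : ℝ, f β = (1/2) * (β - u)^2 + α * |β| ^ q)
    (x : ℝ) (hx : 0 < x) :
    HasDerivAt f (x - u + α*(q*x^(q-1))) x := by
  have hA : HasDerivAt (fun β : ℝ => (1/2) * (β - u)^2) (x - u) x := by
    have h := (((hasDerivAt_id x).sub_const u).pow 2).const_mul (1/2 : ℝ)
    exact h.congr_deriv (by simp)
  have hB : HasDerivAt (fun β : ℝ => α * β ^ q) (α*(q*x^(q-1))) x :=
    (Real.hasDerivAt_rpow_const (Or.inl hx.ne')).const_mul α
  have h1 := hA.add hB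
  apply h1.congr_of_eventuallyEq
  filter_upwards [Ioi_mem_nhds hx] with β (hβ : 0 < β)
  rw [hf, abs_of_pos hβ]
  rfl

lemma aux_derivG (q α : ℝ) (x : ℝ) (hx : 0 < x) :
    HasDerivAt (fun β : ℝ => β + q*α*β^(q-1)) (1 + q*α*((q-1)*x^(q-2))) x := by
  have hB : HasDerivAt (fun β : ℝ => q*α*β^(q-1)) (q*α*((q-1)*x^(q-2))) x := by
    have h := (Real.hasDerivAt_rpow_const (p := q-1) (Or.inl hx.ne')).const_mul (q*α)
    exact h.congr_deriv (by ring_nf)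
  exact (hasDerivAt_id x).add hB

lemma core2 (q α u : ℝ) (hq1 : 0 < q) (hq2 : q < 1) (hα : 0 < α) (hu : 0 < u)
    (f : ℝ → ℝ) (hf : ∀ β : ℝ, f β = (1/2) * (β - u)^2 + α * |β| ^ q)
    (hgt : ((2*(1-q)) ^ ((1:ℝ)/(2-q)) + q * (2*(1-q)) ^ ((q-1)/(2-q))) * α ^ ((1:ℝ)/(2-q)) < u)
    (b : ℝ) (hbmin : ∀ β : ℝ, f b ≤ f β) :
    0 < b ∧ b + q*α*b^(q-1) = u ∧ (∀ β : ℝ, 0 < β → β + q*α*β^(q-1) = u → β ≤ b) := by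
  have h2q : (0:ℝ) < 2 - q := by linarith
  have h1q : (0:ℝ) < 1 - q := by linarith
  have hf0 : f 0 = (1/2) * u^2 := by
    rw [hf]; simp [Real.zero_rpow hq1.ne']
  set ts : ℝ := (2*(1-q)*α) ^ ((1:ℝ)/(2-q)) with hts
  have hts0 : 0 < ts := Real.rpow_pos_of_pos (by positivity) _
  have htsq : ts ^ q = ts * ts ^ (q-1) := by
    nth_rewrite 1 [show q = 1 + (q-1) by ring]
    rw [Real.rpow_add hts0, Real.rpow_one]
  have hfts : f ts < f 0 := by
    rw [hf, hf0, abs_of_pos hts0, htsq]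
    have h := aux_star q α hq1 hq2 hα
    rw [← hts] at h
    nlinarith [h, hgt, hts0]
  have hfb0 : f b < f 0 := lt_of_le_of_lt (hbmin ts) hfts
  have hbne : b ≠ 0 := by rintro rfl; exact lt_irrefl _ hfb0
  have hbpos : 0 < b := by
    rcases hbne.lt_or_gt with h | h
    · exfalso
      have h2 := hbmin (-b)
      rw [hf b, hf (-b), abs_neg] at h2
      nlinarith [mul_pos (neg_pos.2 h) hu]
    · exact h
  have hloc : IsLocalMin f b := Filter.Eventually.of_forall hbmin
  have hd0 : b - u + α*(q*b^(q-1)) = 0 :=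
    hloc.hasDerivAt_eq_zero (aux_deriv q α u f hf b hbpos)
  have heq : b + q*α*b^(q-1) = u := by linear_combination hd0
  refine ⟨hbpos, heq, ?_⟩
  set t₀ : ℝ := (q*(1-q)*α) ^ ((1:ℝ)/(2-q)) with ht₀
  have ht₀0 : 0 < t₀ := Real.rpow_pos_of_pos (by positivity) _
  have hkey : q*(1-q)*α * t₀ ^ (q-2) = 1 := by
    rw [ht₀, ← Real.rpow_mul (by positivity)]
    have : (1:ℝ)/(2-q) * (q-2) = -1 := by field_simp; ring
    rw [this, Real.rpow_neg_one]
    exact mul_inv_cancel₀ (by positivity)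
  set G : ℝ → ℝ := fun β => β + q*α*β^(q-1) with hG
  have hcontG : ∀ x : ℝ, 0 < x → ContinuousAt G x := fun x hx =>
    (aux_derivG q α x hx).continuousAt
  have hderivG : ∀ x : ℝ, 0 < x → deriv G x = 1 + q*α*((q-1)*x^(q-2)) := fun x hx =>
    (aux_derivG q α x hx).deriv
  have hbt : t₀ ≤ b := by
    by_contra hbt
    push_neg at hbt
    have hGanti : StrictAntiOn G (Set.Icc b t₀) := by
      apply strictAntiOn_of_deriv_neg (convex_Icc _ _)
      · exact fun x hx => (hcontG x (lt_of_lt_of_le hbpos hx.1)).continuousWithinAt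
      · intro x hx
        rw [interior_Icc] at hx
        have hx0 : 0 < x := lt_trans hbpos hx.1
        rw [hderivG x hx0]
        have hlt := Real.rpow_lt_rpow_of_neg hx0 hx.2 (show q-2 < 0 by linarith)
        nlinarith [mul_lt_mul_of_pos_left hlt (show 0 < q*(1-q)*α by positivity), hkey]
    have hfanti : StrictAntiOn f (Set.Icc b t₀) := by
      apply strictAntiOn_of_deriv_neg (convex_Icc _ _)
      · exact fun x hx =>
          (aux_deriv q α u f hf x (lt_of_lt_of_le hbpos hx.1)).continuousAt.continuousWithinAt
      · intro x hx
        rw [interior_Icc] at hx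
        have hx0 : 0 < x := lt_trans hbpos hx.1
        rw [(aux_deriv q α u f hf x hx0).deriv]
        have h1 : G x < G b :=
          hGanti ⟨le_rfl, hbt.le⟩ ⟨hx.1.le, hx.2.le⟩ hx.1
        rw [hG] at h1
        simp only at h1
        nlinarith [heq]
    have := hfanti ⟨le_rfl, hbt.le⟩ ⟨hbt.le, le_rfl⟩ hbt
    exact absurd (hbmin t₀) (not_le.2 this)
  intro β hβ hroot
  by_contra hbβ
  push_neg at hbβ
  have hGmono : StrictMonoOn G (Set.Ici t₀) := by
    apply strictMonoOn_of_deriv_pos (convex_Ici _)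
    · exact fun x hx => (hcontG x (lt_of_lt_of_le ht₀0 hx)).continuousWithinAt
    · intro x hx
      rw [interior_Ici] at hx
      have hx0 : 0 < x := lt_trans ht₀0 hx
      rw [hderivG x hx0]
      have hlt := Real.rpow_lt_rpow_of_neg ht₀0 hx (show q-2 < 0 by linarith)
      nlinarith [mul_lt_mul_of_pos_left hlt (show 0 < q*(1-q)*α by positivity), hkey]
  have h1 : G b < G β := hGmono hbt (le_trans hbt hbβ.le) hbβ
  rw [hG] at h1
  simp only at h1
  rw [heq, hroot] at h1
  exact lt_irrefl _ h1

/-- For `0 < q < 1`: below the threshold `C_q α^{1/(2-q)}` the unique global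
minimizer of `f(β) = (1/2)(β-u)² + α|β|^q` is `0`; above it, any global
minimizer is nonzero, has the sign of `u`, and its absolute value is the largest
positive solution of `β + qαβ^{q-1} = |u|`. -/
theorem stmt_5 (q α u : ℝ) (hq1 : 0 < q) (hq2 : q < 1) (hα : 0 < α)
    (C : ℝ)
    (hC : C = (2 * (1 - q)) ^ (1 / (2 - q)) + q * (2 * (1 - q)) ^ ((q - 1) / (2 - q)))
    (f : ℝ → ℝ)
    (hf : ∀ β : ℝ, f β = (1/2) * (β - u)^2 + α * |β| ^ q) :
    (|u| < C * α ^ (1 / (2 - q)) → ∀ β : ℝ, β ≠ 0 → f 0 < f β) ∧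
    (|u| > C * α ^ (1 / (2 - q)) → ∀ b : ℝ, (∀ β : ℝ, f b ≤ f β) →
      b ≠ 0 ∧ Real.sign b = Real.sign u ∧
      |b| + q * α * |b| ^ (q - 1) = |u| ∧
      (∀ β : ℝ, 0 < β → β + q * α * β ^ (q - 1) = |u| → β ≤ |b|)) := by
  have h2q : (0:ℝ) < 2 - q := by linarith
  have h1q : (0:ℝ) < 1 - q := by linarith
  have hC0 : 0 < C := by
    rw [hC]
    have h1 := Real.rpow_pos_of_pos (show (0:ℝ) < 2*(1-q) by linarith) (1/(2-q))
    have h2 := Real.rpow_pos_of_pos (show (0:ℝ) < 2*(1-q) by linarith) ((q-1)/(2-q))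
    nlinarith
  have hT0 : 0 < C * α ^ (1/(2-q)) := mul_pos hC0 (Real.rpow_pos_of_pos hα _)
  constructor
  · -- below threshold
    intro hlt β hβ
    have habs : 0 < |β| := abs_pos.2 hβ
    have h0 : f 0 = (1/2) * u^2 := by rw [hf]; simp [Real.zero_rpow hq1.ne']
    have hsplit : |β| ^ q = |β| * |β| ^ (q-1) := by
      nth_rewrite 1 [show q = 1 + (q-1) by ring]
      rw [Real.rpow_add habs, Real.rpow_one]
    have hAM := aux_lb q α hq1 hq2 hα |β| habs
    rw [← hC] at hAM
    rw [h0, hf β, hsplit]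
    have huβ : u * β ≤ |u| * |β| := by rw [← abs_mul]; exact le_abs_self _
    nlinarith [mul_le_mul_of_nonneg_left hAM (abs_nonneg β),
      mul_lt_mul_of_pos_left hlt habs, sq_abs β]
  · -- above threshold
    intro hgt b hbmin
    have hune : u ≠ 0 := by
      rintro rfl; rw [abs_zero] at hgt; linarith
    rcases hune.lt_or_gt with hu | hu
    · -- u < 0 : reduce to positive case via g β = f (-β)
      set g : ℝ → ℝ := fun β => f (-β) with hgdef
      have hg : ∀ β : ℝ, g β = (1/2) * (β - (-u))^2 + α * |β| ^ q := by
        intro β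
        rw [hgdef]
        simp only
        rw [hf, abs_neg]
        ring_nf
      have hgmin : ∀ β : ℝ, g (-b) ≤ g β := by
        intro β
        rw [hgdef]
        simp only [neg_neg]
        exact hbmin (-β)
      have hgt' : ((2*(1-q)) ^ ((1:ℝ)/(2-q)) + q * (2*(1-q)) ^ ((q-1)/(2-q))) * α ^ ((1:ℝ)/(2-q))
          < -u := by
        rw [← hC]
        rwa [abs_of_neg hu] at hgt
      obtain ⟨hb, heq, hmax⟩ := core2 q α (-u) hq1 hq2 hα (neg_pos.2 hu) g hg hgt' (-b) hgmin
      have hbneg : b < 0 := by linarith [hb]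
      refine ⟨hbneg.ne, ?_, ?_, ?_⟩
      · rw [Real.sign_of_neg hbneg, Real.sign_of_neg hu]
      · rw [abs_of_neg hbneg, abs_of_neg hu]; exact heq
      · intro β hβ hr
        rw [abs_of_neg hbneg]
        exact hmax β hβ (by rwa [abs_of_neg hu] at hr)
    · -- u > 0
      have hgt' : ((2*(1-q)) ^ ((1:ℝ)/(2-q)) + q * (2*(1-q)) ^ ((q-1)/(2-q))) * α ^ ((1:ℝ)/(2-q))
          < u := by
        rw [← hC]
        rwa [abs_of_pos hu] at hgt
      obtain ⟨hb, heq, hmax⟩ := core2 q α u hq1 hq2 hα hu f hf hgt' b hbmin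
      refine ⟨hb.ne', ?_, ?_, ?_⟩
      · rw [Real.sign_of_pos hb, Real.sign_of_pos hu]
      · rw [abs_of_pos hb, abs_of_pos hu]; exact heq
      · intro β hβ hr
        rw [abs_of_pos hb]
        exact hmax β hβ (by rwa [abs_of_pos hu] at hr)
end

section
/- For Σ = [[1,ρ],[ρ,1]], 0 ≤ ρ < 1, and q ∈ (0,1), the minimizer of h(β) = (1/2)(1-ρ²)(β - w)² + α|β|^q over β ∈ ℝ, where w = (ξ₂ - ρξ₁)/(1-ρ²), equals 0 whenever |ξ₂ - ρξ₁| < (1-ρ²)·C_q·(α/(1-ρ²))^{1/(2-q)}, where C_q = [2(1-q)]^{1/(2-q)} + q[2(1-q)]^{(q-1)/(2-q)}. -/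
open Real

lemma key_amgm (q a t : ℝ) (hq1 : 0 < q) (hq2 : q < 1) (ha : 0 < a) (ht : 0 < t) :
    (2 - q) * (2 * (1 - q)) ^ ((q - 1) / (2 - q)) * a ^ (1 / (2 - q))
      ≤ t / 2 + a * t ^ (q - 1) := by
  have h2q : (0:ℝ) < 2 - q := by linarith
  have h1q : (0:ℝ) < 1 - q := by linarith
  have hX : (0:ℝ) < 2 * (1 - q) := by linarith
  set l := (1 - q) / (2 - q) with hl
  set m := (1 : ℝ) / (2 - q) with hm
  have hlpos : 0 < l := div_pos h1q h2q
  have hmpos : 0 < m := div_pos one_pos h2q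
  have hlm : l + m = 1 := by rw [hl, hm]; field_simp; ring
  have htpow : (0:ℝ) < t ^ (q - 1) := rpow_pos_of_pos ht _
  have hp1 : (0:ℝ) < t / (2 * l) := by positivity
  have hp2 : (0:ℝ) < a * t ^ (q - 1) / m := by positivity
  have hgm := Real.geom_mean_le_arith_mean2_weighted hlpos.le hmpos.le hp1.le hp2.le hlm
  have hrhs : l * (t / (2 * l)) + m * (a * t ^ (q - 1) / m) = t / 2 + a * t ^ (q - 1) := by
    field_simp
  have he1 : t / (2 * l) = t * (2 - q) / (2 * (1 - q)) := by
    rw [hl]; field_simp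
  have he2 : a * t ^ (q - 1) / m = a * t ^ (q - 1) * (2 - q) := by
    rw [hm]; field_simp
  have e3 : (t ^ (q - 1)) ^ m = (t ^ l)⁻¹ := by
    rw [← Real.rpow_mul ht.le, show (q - 1) * m = -l by rw [hm, hl]; ring,
      Real.rpow_neg ht.le]
  have e7 : (2 * (1 - q)) ^ l = ((2 * (1 - q)) ^ ((q - 1) / (2 - q)))⁻¹ := by
    rw [show l = -((q - 1) / (2 - q)) by rw [hl]; ring, Real.rpow_neg hX.le]
  have e6 : (2 - q) ^ l * (2 - q) ^ m = 2 - q := by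
    rw [← Real.rpow_add h2q, hlm, Real.rpow_one]
  have htl : t ^ l ≠ 0 := ne_of_gt (rpow_pos_of_pos ht _)
  have hlhs : (t / (2 * l)) ^ l * (a * t ^ (q - 1) / m) ^ m
      = (2 - q) * (2 * (1 - q)) ^ ((q - 1) / (2 - q)) * a ^ (1 / (2 - q)) := by
    rw [← hm, he1, he2, Real.div_rpow (by positivity) hX.le,
      Real.mul_rpow ht.le h2q.le, Real.mul_rpow (by positivity) h2q.le,
      Real.mul_rpow ha.le htpow.le, e3, e7, div_eq_mul_inv, inv_inv]
    calc t ^ l * (2 - q) ^ l * (2 * (1 - q)) ^ ((q - 1) / (2 - q))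
          * (a ^ m * (t ^ l)⁻¹ * (2 - q) ^ m)
        = ((2 - q) ^ l * (2 - q) ^ m) * (2 * (1 - q)) ^ ((q - 1) / (2 - q)) * a ^ m
            * (t ^ l * (t ^ l)⁻¹) := by ring
      _ = (2 - q) * (2 * (1 - q)) ^ ((q - 1) / (2 - q)) * a ^ m := by
          rw [e6, mul_inv_cancel₀ htl, mul_one]
  rw [hrhs, hlhs] at hgm
  exact hgm

/-- Coordinate problem in the `q ∈ (0,1)` analysis: the minimizer of
`h(β) = (1/2)(1-ρ²)(β - w)² + α|β|^q` with `w = (ξ₂ - ρξ₁)/(1-ρ²)` equals `0`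
whenever `|ξ₂ - ρξ₁| < (1-ρ²)·C_q·(α/(1-ρ²))^{1/(2-q)}`. -/
theorem stmt_17 (q α ρ ξ₁ ξ₂ : ℝ) (hq1 : 0 < q) (hq2 : q < 1) (hα : 0 < α)
    (hρ0 : 0 ≤ ρ) (hρ1 : ρ < 1)
    (C w : ℝ)
    (hC : C = (2 * (1 - q)) ^ (1 / (2 - q)) + q * (2 * (1 - q)) ^ ((q - 1) / (2 - q)))
    (hw : w = (ξ₂ - ρ * ξ₁) / (1 - ρ^2))
    (h : ℝ → ℝ)
    (hh : ∀ β : ℝ, h β = (1/2) * (1 - ρ^2) * (β - w)^2 + α * |β| ^ q)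
    (hthr : |ξ₂ - ρ * ξ₁| < (1 - ρ^2) * C * (α / (1 - ρ^2)) ^ (1 / (2 - q))) :
    ∀ b : ℝ, (∀ β : ℝ, h b ≤ h β) → b = 0 := by
  intro b hb
  by_contra hb0
  have hs0 : (0:ℝ) < 1 - ρ^2 := by nlinarith
  set s : ℝ := 1 - ρ^2 with hsdef
  have h2q : (0:ℝ) < 2 - q := by linarith
  have ht : 0 < |b| := abs_pos.mpr hb0
  have ha : 0 < α / s := div_pos hα hs0
  have hC' : C = (2 - q) * (2 * (1 - q)) ^ ((q - 1) / (2 - q)) := by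
    have h1q : (0:ℝ) < 2 * (1 - q) := by linarith
    have he : (1 : ℝ) / (2 - q) = (q - 1) / (2 - q) + 1 := by field_simp; norm_num
    rw [hC, he, Real.rpow_add_one (ne_of_gt h1q)]
    ring
  have h0 := hb 0
  rw [hh b, hh 0] at h0
  have habs0 : |(0:ℝ)| ^ q = 0 := by
    simp [Real.zero_rpow (ne_of_gt hq1)]
  rw [habs0] at h0
  have hkey : (1/2) * s * b^2 + α * |b| ^ q ≤ s * (b * w) := by nlinarith [sq_nonneg (b - w)]
  have hpow : 0 < α * |b| ^ q := by positivity
  have hbw : 0 < b * w := by nlinarith [sq_nonneg b]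
  have habsbw : |b| * |w| = b * w := by
    rw [← abs_mul, abs_of_pos hbw]
  have hkey2 : (1/2) * s * |b|^2 + α * |b| ^ q ≤ s * (|b| * |w|) := by
    rw [habsbw, sq_abs]; linarith
  have hP : |b| ^ (q - 1) * |b| = |b| ^ q := by
    rw [← Real.rpow_add_one (ne_of_gt ht) (q - 1)]
    norm_num
  have hW : |b| / 2 + (α / s) * |b| ^ (q - 1) ≤ |w| := by
    rw [← mul_le_mul_iff_right₀ (mul_pos hs0 ht)]
    have hsa : s * (α / s) = α := by
      field_simp
    have expand : s * |b| * (|b| / 2 + (α / s) * |b| ^ (q - 1))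
        = (1/2) * s * |b|^2 + (s * (α / s)) * (|b| ^ (q - 1) * |b|) := by ring
    rw [expand, hsa, hP]
    have : s * (|b| * |w|) = s * |b| * |w| := by ring
    linarith
  have hsw : |ξ₂ - ρ * ξ₁| = s * |w| := by
    have : ξ₂ - ρ * ξ₁ = s * w := by
      rw [hw]
      field_simp
    rw [this, abs_mul, abs_of_pos hs0]
  have hwlt : |w| < C * (α / s) ^ (1 / (2 - q)) := by
    rw [hsw, mul_assoc] at hthr
    exact (mul_lt_mul_iff_right₀ hs0).mp hthr
  have hamgm := key_amgm q (α / s) |b| hq1 hq2 ha ht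
  rw [← hC'] at hamgm
  linarith
end
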